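/- arXiv:1603.07214 — 3 statements merged into one kernel-verified Lean document; each statement's English description precedes it below -/
import Mathlib

section
/- Let g ∈ SL(V) where V = ℝ^d is Euclidean, let κ₁(g) ≥ κ₂(g) ≥ … be the singular values of g, set κ_{1,2}(g) = κ₂(g)/κ₁(g). With Y_g^m the line in V* spanned by the top row of a Cartan decomposition of g, for any nonzero x ∈ V with X = ℝx one has δ(X, Y_g^m) ≤ ‖gx‖/(‖g‖‖x‖) ≤ δ(X, Y_g^m) + κ_{1,2}(g), where δ(ℝx, ℝφ) = |φ(x)|/(‖φ‖‖x‖). -/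
/-!
Write `y = l x`, so that `‖g x‖ = ‖a y‖` and `‖y‖ = ‖x‖`; the operator norm of `g` is `a₀`.
The first coordinate of `a y` alone gives `a₀ |y₀| ≤ ‖a y‖`; splitting `a y` into its first
coordinate and the rest, whose entries are at most `a₁`, gives `‖a y‖ ≤ a₀ |y₀| + a₁ ‖y‖`.
Dividing by `a₀ ‖x‖` yields both inequalities.
-/

noncomputable section

/-- Operator norm realization of a real `d×d` matrix acting on Euclidean space. -/
def op {d : ℕ} (g : Matrix (Fin d) (Fin d) ℝ) :
    EuclideanSpace ℝ (Fin d) →L[ℝ] EuclideanSpace ℝ (Fin d) :=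
  Matrix.toEuclideanCLM (𝕜 := ℝ) g

open scoped Matrix.Norms.L2Operator

lemma pi_norm_eq_of_forall_abs_le {ι : Type*} [Fintype ι] {a : ι → ℝ} {i₀ : ι}
    (ha : ∀ i, |a i| ≤ a i₀) : ‖a‖ = a i₀ :=
  le_antisymm ((pi_norm_le_iff_of_nonneg ((abs_nonneg _).trans (ha i₀))).2 ha)
    ((le_abs_self _).trans (norm_le_pi_norm a i₀))

lemma div_le_div_mul_and_div_mul_le_add {a t N n c : ℝ} (ha : 0 < a) (hc : 0 ≤ c) (hn : 0 ≤ n)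
    (hlow : a * t ≤ N) (hup : N ≤ a * t + c * n) :
    t / n ≤ N / (a * n) ∧ N / (a * n) ≤ t / n + c / a := by
  constructor
  · calc t / n = a * t / (a * n) := (mul_div_mul_left _ _ ha.ne').symm
      _ ≤ N / (a * n) := by gcongr
  · calc N / (a * n) ≤ (a * t + c * n) / (a * n) := by gcongr
      _ = t / n + c / a * (n / n) := by rw [add_div, mul_div_mul_left _ _ ha.ne', mul_div_mul_comm]
      _ ≤ t / n + c / a :=
        add_le_add_right (mul_le_of_le_one_right (div_nonneg hc ha.le) (div_self_le_one _)) _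

namespace op

variable {d : ℕ}

lemma mul (A B : Matrix (Fin d) (Fin d) ℝ) : op (A * B) = op A * op B :=
  map_mul Matrix.toEuclideanCLM A B

lemma mem_unitary {k : Matrix (Fin d) (Fin d) ℝ} (hk : k ∈ Matrix.orthogonalGroup (Fin d) ℝ) :
    op k ∈ unitary (EuclideanSpace ℝ (Fin d) →L[ℝ] EuclideanSpace ℝ (Fin d)) :=
  Unitary.map_mem Matrix.toEuclideanCLM hk

lemma norm_apply_of_mem_orthogonalGroup {k : Matrix (Fin d) (Fin d) ℝ}
    (hk : k ∈ Matrix.orthogonalGroup (Fin d) ℝ) (x : EuclideanSpace ℝ (Fin d)) :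
    ‖op k x‖ = ‖x‖ :=
  (op k).norm_map_of_mem_unitary (mem_unitary hk) x

lemma norm_orthogonal_mul_mul_orthogonal {k l : Matrix (Fin d) (Fin d) ℝ}
    (hk : k ∈ Matrix.orthogonalGroup (Fin d) ℝ) (hl : l ∈ Matrix.orthogonalGroup (Fin d) ℝ)
    (D : Matrix (Fin d) (Fin d) ℝ) : ‖op (k * D * l)‖ = ‖op D‖ := by
  rw [mul, mul, CStarRing.norm_mul_mem_unitary _ (mem_unitary hl),
    CStarRing.norm_mem_unitary_mul _ (mem_unitary hk)]

lemma diagonal_apply (a : Fin d → ℝ) (y : EuclideanSpace ℝ (Fin d)) (i : Fin d) :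
    op (Matrix.diagonal a) y i = a i * y i :=
  Matrix.mulVec_diagonal a y i

lemma abs_mul_le_norm_diagonal_apply (a : Fin d → ℝ) (y : EuclideanSpace ℝ (Fin d)) (i : Fin d) :
    |a i * y i| ≤ ‖op (Matrix.diagonal a) y‖ := by
  simpa only [diagonal_apply, Real.norm_eq_abs] using
    PiLp.norm_apply_le (op (Matrix.diagonal a) y) i

lemma norm_eq_l2_opNorm (A : Matrix (Fin d) (Fin d) ℝ) : ‖op A‖ = ‖A‖ := rfl

lemma norm_diagonal (a : Fin d → ℝ) : ‖op (Matrix.diagonal a)‖ = ‖a‖ := by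
  rw [norm_eq_l2_opNorm, Matrix.l2_opNorm_diagonal]

lemma norm_diagonal_apply_le_add {a : Fin d → ℝ} {c : ℝ} (i₀ : Fin d) (hc : 0 ≤ c)
    (ha : ∀ i ≠ i₀, |a i| ≤ c) (y : EuclideanSpace ℝ (Fin d)) :
    ‖op (Matrix.diagonal a) y‖ ≤ |a i₀ * y i₀| + c * ‖y‖ := by
  have hsplit : op (Matrix.diagonal a) y = EuclideanSpace.single i₀ (a i₀ * y i₀) +
      op (Matrix.diagonal (Function.update a i₀ 0)) y := by
    ext i
    by_cases h : i = i₀ <;> simp [diagonal_apply, h]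
  have hrest : ‖Function.update a i₀ 0‖ ≤ c := by
    refine (pi_norm_le_iff_of_nonneg hc).2 fun i ↦ ?_
    by_cases h : i = i₀
    · simpa [h] using hc
    · simpa [h] using ha i h
  calc ‖op (Matrix.diagonal a) y‖
      ≤ ‖EuclideanSpace.single i₀ (a i₀ * y i₀)‖ +
          ‖op (Matrix.diagonal (Function.update a i₀ 0)) y‖ := hsplit ▸ norm_add_le _ _
    _ ≤ |a i₀ * y i₀| + c * ‖y‖ := by
      rw [PiLp.norm_single, Real.norm_eq_abs]
      gcongr
      calc _ ≤ ‖op (Matrix.diagonal (Function.update a i₀ 0))‖ * ‖y‖ := (op _).le_opNorm y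
        _ ≤ c * ‖y‖ := by rw [norm_diagonal]; gcongr

end op

/-- Let `g ∈ SL(V)`, `V = ℝ^d` Euclidean, with Cartan decomposition `g = k a l`
(`k, l` orthogonal, `a = diagonal κ` with `κ₁ ≥ κ₂ ≥ … ≥ 0` the singular values).
With `Y_g^m = ℝ (ᵗl e₁*)` (so that `δ(ℝx, Y_g^m) = |(l x)₁| / ‖x‖`, the functional
`ᵗl e₁*` having norm one), for every nonzero `x`:
`δ(X, Y_g^m) ≤ ‖gx‖/(‖g‖‖x‖) ≤ δ(X, Y_g^m) + κ₂/κ₁`. -/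
theorem stmt1 {d : ℕ} (hd : 2 ≤ d)
    (g k l : Matrix (Fin d) (Fin d) ℝ) (a : Fin d → ℝ)
    (hg : g.det = 1)
    (hk : k ∈ Matrix.orthogonalGroup (Fin d) ℝ)
    (hl : l ∈ Matrix.orthogonalGroup (Fin d) ℝ)
    (hdecomp : g = k * Matrix.diagonal a * l)
    (hmono : ∀ i j : Fin d, i ≤ j → a j ≤ a i)
    (hpos : ∀ i, 0 ≤ a i)
    (x : EuclideanSpace ℝ (Fin d)) :
    |op l x ⟨0, by omega⟩| / ‖x‖ ≤ ‖op g x‖ / (‖op g‖ * ‖x‖) ∧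
      ‖op g x‖ / (‖op g‖ * ‖x‖) ≤ |op l x ⟨0, by omega⟩| / ‖x‖ +
        a ⟨1, by omega⟩ / a ⟨0, by omega⟩ := by
  set i₀ : Fin d := ⟨0, by omega⟩
  set i₁ : Fin d := ⟨1, by omega⟩
  set y := op l x
  have ha₀ : 0 < a i₀ := by
    refine (hpos i₀).lt_of_ne' fun h ↦ ?_
    simp [hdecomp, Matrix.det_diagonal, Finset.prod_eq_zero (Finset.mem_univ i₀) h] at hg
  have hnorm : ‖op g‖ = a i₀ := by
    rw [hdecomp, op.norm_orthogonal_mul_mul_orthogonal hk hl]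
    exact (op.norm_diagonal a).trans <| pi_norm_eq_of_forall_abs_le fun i ↦
      (abs_of_nonneg (hpos i)).trans_le (hmono _ _ (Fin.mk_le_mk.2 (Nat.zero_le _)))
  have hgx : ‖op g x‖ = ‖op (Matrix.diagonal a) y‖ := by
    rw [hdecomp, op.mul, op.mul]
    exact op.norm_apply_of_mem_orthogonalGroup hk _
  have hy : ‖y‖ = ‖x‖ := op.norm_apply_of_mem_orthogonalGroup hl x
  have hya : |a i₀ * y i₀| = a i₀ * |y i₀| := by rw [abs_mul, abs_of_pos ha₀]
  have hrest : ∀ i ≠ i₀, |a i| ≤ a i₁ := fun i hi ↦ (abs_of_nonneg (hpos i)).trans_le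
    (hmono _ _ (Fin.le_def.2 (Nat.one_le_iff_ne_zero.2 fun h ↦ hi (Fin.ext h))))
  rw [hnorm, hgx]
  refine div_le_div_mul_and_div_mul_le_add ha₀ (hpos i₁) (norm_nonneg x)
    (hya ▸ op.abs_mul_le_norm_diagonal_apply a y i₀) ?_
  rw [← hya, ← hy]
  exact op.norm_diagonal_apply_le_add i₀ (hpos i₁) hrest y
end
end

section
/- Let ρ be a Borel probability measure on a group G acting on a compact metric space X, fibering G-equivariantly over a finite G-set A. If X is (ρ, γ, M, N)-contracted over A, then there exist constants C₁ > 0 and δ > 0 such that for all n ∈ ℕ and all x, y ∈ X with π_A(x) = π_A(y): ∫ d(gx, gy)^γ dρ^{*n}(g) ≤ C₁ e^{−δn} d(x,y)^γ. -/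
/-!
Write `D_n(x, y) = ∫ d(gx, gy)^γ dρ^{*n}(g)` (`distMoment`). Splitting `ρ^{*(a+b)} = ρ^{*a} ∗ ρ^{*b}`
gives `D_{a+b}(x, y) = ∫ D_a(hx, hy) dρ^{*b}(h)`. With `a = n₀`, the contraction hypothesis applied
to the pair `(hx, hy)`, which stays in one fibre by equivariance, yields `D_{n₀+m} ≤ c D_m`; with
`a = m`, `b = 1`, the Lipschitz bound and the moment condition yield the a priori growth
`D_m ≤ K^m d^γ`. Iterating the first inequality `⌊n / n₀⌋` times and bounding the remaining `< n₀`
steps by the second gives `D_n ≤ (K^{n₀} / c) c^{n / n₀} d^γ`.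
-/

noncomputable section

open MeasureTheory

def convPow {G : Type*} [Monoid G] [MeasurableSpace G] (ρ : Measure G) : ℕ → Measure G
  | 0 => Measure.dirac 1
  | n + 1 => (convPow ρ n).mconv ρ

theorem le_div_mul_rpow_of_le_mul_add {u : ℕ → ℝ} {n₀ : ℕ} {B c : ℝ} (hn₀ : 0 < n₀)
    (hc₀ : 0 < c) (hc₁ : c ≤ 1) (hB : 0 ≤ B) (hinit : ∀ r < n₀, u r ≤ B)
    (hstep : ∀ m, u (n₀ + m) ≤ c * u m) (n : ℕ) :
    u n ≤ B / c * c ^ ((n : ℝ) / n₀) := by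
  have hblock : ∀ k r, r < n₀ → u (n₀ * k + r) ≤ c ^ k * B := by
    intro k
    induction k with
    | zero => intro r hr; simpa using hinit r hr
    | succ k ih =>
      intro r hr
      calc u (n₀ * (k + 1) + r) = u (n₀ + (n₀ * k + r)) := by ring_nf
        _ ≤ c * u (n₀ * k + r) := hstep _
        _ ≤ c * (c ^ k * B) := by gcongr; exact ih r hr
        _ = c ^ (k + 1) * B := by ring
  have hpow : c ^ (n / n₀) ≤ c ^ ((n : ℝ) / n₀) / c := by
    rw [← Real.rpow_sub_one hc₀.ne', ← Real.rpow_natCast, ← Nat.floor_div_eq_div (K := ℝ)]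
    exact Real.rpow_le_rpow_of_exponent_ge hc₀ hc₁ (Nat.sub_one_lt_floor _).le
  calc u n = u (n₀ * (n / n₀) + n % n₀) := by rw [Nat.div_add_mod]
    _ ≤ c ^ (n / n₀) * B := hblock _ _ (Nat.mod_lt _ hn₀)
    _ ≤ c ^ ((n : ℝ) / n₀) / c * B := by gcongr
    _ = B / c * c ^ ((n : ℝ) / n₀) := by ring

section ConvPow

variable {G : Type*} [Monoid G] [MeasurableSpace G]

theorem integral_mconv_symm [MeasurableMul₂ G] {E : Type*} [NormedAddCommGroup E]
    [NormedSpace ℝ E] {μ ν : Measure G} [SFinite μ] [SFinite ν] {f : G → E}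
    (hf : Integrable f (μ.mconv ν)) :
    ∫ g, f g ∂(μ.mconv ν) = ∫ h, ∫ g, f (g * h) ∂μ ∂ν := by
  unfold Measure.mconv
  rw [integral_map (by fun_prop) hf.1, integral_prod_symm]
  exact (integrable_map_measure hf.1 (by fun_prop)).mp hf

instance convPow.instIsFiniteMeasure (ρ : Measure G) [IsFiniteMeasure ρ] :
    ∀ n, IsFiniteMeasure (convPow ρ n)
  | 0 => by unfold convPow; infer_instance
  | n + 1 => by unfold convPow; have := instIsFiniteMeasure ρ n; infer_instance

theorem convPow_succ (ρ : Measure G) (n : ℕ) :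
    convPow ρ (n + 1) = (convPow ρ n).mconv ρ := rfl

theorem convPow_add [MeasurableMul₂ G] (ρ : Measure G) [IsFiniteMeasure ρ] (m n : ℕ) :
    convPow ρ (m + n) = (convPow ρ m).mconv (convPow ρ n) := by
  induction n with
  | zero => exact (Measure.mconv_dirac_one _).symm
  | succ n ih => rw [← add_assoc, convPow_succ, ih, convPow_succ, Measure.mconv_assoc]

end ConvPow

section DistMoment

variable {G X : Type*} [Monoid G] [MetricSpace X] [MulAction G X] {γ : ℝ} {x y : X}

theorem continuous_dist_smul_rpow [TopologicalSpace G] [ContinuousSMul G X] (hγ : 0 ≤ γ)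
    (x y : X) : Continuous fun g : G => dist (g • x) (g • y) ^ γ :=
  ((continuous_id.smul continuous_const).dist (continuous_id.smul continuous_const)).rpow_const
    fun _ => Or.inr hγ

variable [MeasurableSpace G]

def distMoment (μ : Measure G) (γ : ℝ) (x y : X) : ℝ :=
  ∫ g, dist (g • x) (g • y) ^ γ ∂μ

theorem distMoment_nonneg (μ : Measure G) (γ : ℝ) (x y : X) : 0 ≤ distMoment μ γ x y :=
  integral_nonneg fun _ => Real.rpow_nonneg dist_nonneg _

theorem distMoment_le_of_integral_div_rpow_le {μ : Measure G} {c : ℝ} (hγ : 0 < γ)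
    (h : x ≠ y → ∫ g, (dist (g • x) (g • y) / dist x y) ^ γ ∂μ ≤ c) :
    distMoment μ γ x y ≤ c * dist x y ^ γ := by
  rcases eq_or_ne x y with rfl | hne
  · simp [distMoment, Real.zero_rpow hγ.ne']
  have hd : 0 < dist x y ^ γ := Real.rpow_pos_of_pos (dist_pos.mpr hne) γ
  have := h hne
  simp only [Real.div_rpow dist_nonneg dist_nonneg, integral_div] at this
  exact (div_le_iff₀ hd).mp this

theorem distMoment_le_of_lipschitz (μ : Measure G) (hγ : 0 ≤ γ) {M : ℝ} (hM : 0 ≤ M)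
    {N : G → ℝ} (hN : ∀ g, 0 ≤ N g)
    (hLip : ∀ (g : G) (x y : X), dist (g • x) (g • y) ≤ M * N g ^ M * dist x y)
    (hmom : Integrable (fun g => N g ^ (M * γ)) μ) (x y : X) :
    distMoment μ γ x y ≤ M ^ γ * (∫ g, N g ^ (M * γ) ∂μ) * dist x y ^ γ := by
  have hpt (g : G) : dist (g • x) (g • y) ^ γ ≤ M ^ γ * N g ^ (M * γ) * dist x y ^ γ := by
    calc dist (g • x) (g • y) ^ γ ≤ (M * N g ^ M * dist x y) ^ γ :=
          Real.rpow_le_rpow dist_nonneg (hLip g x y) hγ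
      _ = M ^ γ * N g ^ (M * γ) * dist x y ^ γ := by
          rw [Real.mul_rpow (mul_nonneg hM (Real.rpow_nonneg (hN g) _)) dist_nonneg,
            Real.mul_rpow hM (Real.rpow_nonneg (hN g) _),
            ← Real.rpow_mul (hN g)]
  calc distMoment μ γ x y ≤ ∫ g, M ^ γ * N g ^ (M * γ) * dist x y ^ γ ∂μ :=
        integral_mono_of_nonneg (.of_forall fun _ => Real.rpow_nonneg dist_nonneg _)
          ((hmom.const_mul _).mul_const _) (.of_forall hpt)
    _ = M ^ γ * (∫ g, N g ^ (M * γ) ∂μ) * dist x y ^ γ := by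
        rw [integral_mul_const, integral_const_mul]

variable [TopologicalSpace G] [OpensMeasurableSpace G] [ContinuousSMul G X] [BoundedSpace X]

theorem integrable_dist_smul_rpow (μ : Measure G) [IsFiniteMeasure μ] (hγ : 0 ≤ γ) (x y : X) :
    Integrable (fun g : G => dist (g • x) (g • y) ^ γ) μ := by
  refine Integrable.of_bound (continuous_dist_smul_rpow hγ x y).aestronglyMeasurable
    (Metric.diam (Set.univ : Set X) ^ γ) (.of_forall fun g => ?_)
  rw [Real.norm_of_nonneg (Real.rpow_nonneg dist_nonneg _)]
  exact Real.rpow_le_rpow dist_nonneg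
    (Metric.dist_le_diam_of_mem (Bornology.IsBounded.all _) trivial trivial) hγ

variable [MeasurableMul₂ G]

theorem distMoment_mconv (μ ν : Measure G) [IsFiniteMeasure μ] [IsFiniteMeasure ν]
    (hγ : 0 ≤ γ) (x y : X) :
    distMoment (μ.mconv ν) γ x y = ∫ h, distMoment μ γ (h • x) (h • y) ∂ν := by
  simp only [distMoment, integral_mconv_symm (integrable_dist_smul_rpow _ hγ x y), mul_smul]

variable {ρ : Measure G} [IsFiniteMeasure ρ]

theorem distMoment_convPow_le {K : ℝ} (hγ : 0 ≤ γ) (hK : 0 ≤ K)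
    (h : ∀ x y : X, distMoment ρ γ x y ≤ K * dist x y ^ γ) (m : ℕ) (x y : X) :
    distMoment (convPow ρ m) γ x y ≤ K ^ m * dist x y ^ γ := by
  induction m generalizing x y with
  | zero =>
    simp [distMoment, convPow,
      integral_dirac' _ _ (continuous_dist_smul_rpow hγ x y).stronglyMeasurable]
  | succ m ih =>
    rw [convPow_succ, distMoment_mconv _ _ hγ]
    calc ∫ h, distMoment (convPow ρ m) γ (h • x) (h • y) ∂ρ
        ≤ ∫ h, K ^ m * dist (h • x) (h • y) ^ γ ∂ρ :=
          integral_mono_of_nonneg (.of_forall fun _ => distMoment_nonneg _ _ _ _)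
            ((integrable_dist_smul_rpow ρ hγ x y).const_mul _) (.of_forall fun h => ih _ _)
      _ = K ^ m * distMoment ρ γ x y := integral_const_mul _ _
      _ ≤ K ^ m * (K * dist x y ^ γ) := by gcongr; exact h x y
      _ = K ^ (m + 1) * dist x y ^ γ := by ring

theorem distMoment_convPow_add_le {A : Type*} [SMul G A] {πA : X → A}
    (hπ : ∀ (g : G) (x : X), πA (g • x) = g • πA x) {n₀ : ℕ} {c : ℝ} (hγ : 0 ≤ γ)
    (hc : ∀ x y : X, πA x = πA y → distMoment (convPow ρ n₀) γ x y ≤ c * dist x y ^ γ)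
    (hxy : πA x = πA y) (m : ℕ) :
    distMoment (convPow ρ (n₀ + m)) γ x y ≤ c * distMoment (convPow ρ m) γ x y := by
  rw [convPow_add, distMoment_mconv _ _ hγ]
  calc ∫ h, distMoment (convPow ρ n₀) γ (h • x) (h • y) ∂(convPow ρ m)
      ≤ ∫ h, c * dist (h • x) (h • y) ^ γ ∂(convPow ρ m) :=
        integral_mono_of_nonneg (.of_forall fun _ => distMoment_nonneg _ _ _ _)
          ((integrable_dist_smul_rpow _ hγ x y).const_mul _)
          (.of_forall fun h => hc _ _ (by rw [hπ, hπ, hxy]))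
    _ = c * distMoment (convPow ρ m) γ x y := integral_const_mul _ _

end DistMoment

theorem stmt13_general {G : Type*} [Group G] [TopologicalSpace G] [IsTopologicalGroup G]
    [SecondCountableTopology G]
    [MeasurableSpace G] [BorelSpace G]
    (ρ : Measure G) [IsProbabilityMeasure ρ]
    {X : Type*} [MetricSpace X] [CompactSpace X] [MulAction G X]
    (hact : Continuous fun p : G × X => p.1 • p.2)
    {A : Type*} [MulAction G A] (πA : X → A)
    (hπ : ∀ (g : G) (x : X), πA (g • x) = g • πA x)
    (γ M : ℝ) (hγ : 0 < γ) (hM : 0 < M)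
    (N : G → ℝ) (hN1 : ∀ g, 1 ≤ N g)
    (hLip : ∀ (g : G) (x y : X), dist (g • x) (g • y) ≤ M * N g ^ M * dist x y)
    (hmom : Integrable (fun g => N g ^ (M * γ)) ρ)
    (hcontr : ∃ (n₀ : ℕ) (c : ℝ), 0 < n₀ ∧ c < 1 ∧
      ∀ x y : X, x ≠ y → πA x = πA y →
        ∫ g, (dist (g • x) (g • y) / dist x y) ^ γ ∂(convPow ρ n₀) ≤ c) :
    ∃ C₁ δ : ℝ, 0 < C₁ ∧ 0 < δ ∧
      ∀ (n : ℕ) (x y : X), πA x = πA y →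
        ∫ g, dist (g • x) (g • y) ^ γ ∂(convPow ρ n)
          ≤ C₁ * Real.exp (-δ * n) * dist x y ^ γ := by
  have : ContinuousSMul G X := ⟨hact⟩
  obtain ⟨n₀, c, hn₀, hc1, hc⟩ := hcontr
  -- `c` itself may be `≤ 0`, which would leave no decay rate `-log c / n₀`.
  set c' := max c (1 / 2)
  have hc'0 : 0 < c' := lt_max_of_lt_right (by norm_num)
  have hc'1 : c' < 1 := max_lt hc1 (by norm_num)
  set K := max (M ^ γ * ∫ g, N g ^ (M * γ) ∂ρ) 1
  have hK1 : 1 ≤ K := le_max_right _ _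
  have hgrowth : ∀ m (x y : X), distMoment (convPow ρ m) γ x y ≤ K ^ m * dist x y ^ γ :=
    distMoment_convPow_le hγ.le (zero_le_one.trans hK1) fun x y =>
      (distMoment_le_of_lipschitz ρ hγ.le hM.le (fun g => zero_le_one.trans (hN1 g)) hLip hmom
        x y).trans (by gcongr; exact le_max_left _ _)
  have hcontract : ∀ x y : X, πA x = πA y →
      distMoment (convPow ρ n₀) γ x y ≤ c' * dist x y ^ γ := fun x y hxy =>
    distMoment_le_of_integral_div_rpow_le hγ fun hne =>
      (hc x y hne hxy).trans (le_max_left _ _)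
  refine ⟨K ^ n₀ / c', -Real.log c' / n₀, by positivity,
    div_pos (neg_pos.mpr (Real.log_neg hc'0 hc'1)) (by exact_mod_cast hn₀), fun n x y hxy => ?_⟩
  have hdecay := le_div_mul_rpow_of_le_mul_add (u := fun n => distMoment (convPow ρ n) γ x y)
    (B := K ^ n₀ * dist x y ^ γ) hn₀ hc'0 hc'1.le (by positivity)
    (fun r hr => (hgrowth r x y).trans (by gcongr))
    (distMoment_convPow_add_le hπ hγ.le hcontract hxy) n
  refine hdecay.trans_eq ?_
  rw [Real.rpow_def_of_pos hc'0]
  ring_nf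

/-- Let `ρ` be a Borel probability measure on a group `G` acting on a compact metric
space `X` which fibers `G`-equivariantly over a finite `G`-set `A`. If `X` is
`(ρ, γ, M, N)`-contracted over `A` — i.e. `d(gx,gy) ≤ M N(g)^M d(x,y)` with
`N : G → [1,∞)` submultiplicative, `∫ N(g)^{Mγ} dρ(g) < ∞`, and for some `n₀` the
quantity `∫ (d(gx,gy)/d(x,y))^γ dρ^{*n₀}(g)` is `≤ c < 1` uniformly over fibers — then
there are `C₁, δ > 0` with `∫ d(gx,gy)^γ dρ^{*n}(g) ≤ C₁ e^{-δn} d(x,y)^γ` for all `n`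
and all `x, y` in the same fiber. -/
theorem stmt13 {G : Type*} [Group G] [TopologicalSpace G] [IsTopologicalGroup G]
    [SecondCountableTopology G] [LocallyCompactSpace G]
    [MeasurableSpace G] [BorelSpace G]
    (ρ : Measure G) [IsProbabilityMeasure ρ]
    {X : Type*} [MetricSpace X] [CompactSpace X] [MulAction G X]
    (hact : Continuous fun p : G × X => p.1 • p.2)
    {A : Type*} [Fintype A] [MulAction G A] (πA : X → A)
    (hπ : ∀ (g : G) (x : X), πA (g • x) = g • πA x)
    (γ M : ℝ) (hγ : 0 < γ) (hM : 0 < M)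
    (N : G → ℝ) (hN1 : ∀ g, 1 ≤ N g) (hNsub : ∀ g h : G, N (g * h) ≤ N g * N h)
    (hLip : ∀ (g : G) (x y : X), dist (g • x) (g • y) ≤ M * N g ^ M * dist x y)
    (hmom : Integrable (fun g => N g ^ (M * γ)) ρ)
    (hcontr : ∃ (n₀ : ℕ) (c : ℝ), 0 < n₀ ∧ c < 1 ∧
      ∀ x y : X, x ≠ y → πA x = πA y →
        ∫ g, (dist (g • x) (g • y) / dist x y) ^ γ ∂(convPow ρ n₀) ≤ c) :
    ∃ C₁ δ : ℝ, 0 < C₁ ∧ 0 < δ ∧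
      ∀ (n : ℕ) (x y : X), πA x = πA y →
        ∫ g, dist (g • x) (g • y) ^ γ ∂(convPow ρ n)
          ≤ C₁ * Real.exp (-δ * n) * dist x y ^ γ :=
  stmt13_general ρ hact πA hπ γ M hγ hM N hN1 hLip hmom hcontr
end
end

section
/- Suppose X is a compact metric G-space contracted by ρ over a finite G-set A and σ : G × X → ℝ is a cocycle such that there exist η, t, C > 0 with sup_x ∫ e^{−sσ(g,x)} dρ^{*n}(g) ≤ C e^{−tsn} for all s ∈ [0, η] and n ∈ ℕ (positive drift). Suppose also P(it) is the perturbed operator P(z)f(x) = ∫ e^{−zσ(g,x)}f(gx)dρ(g), and f ∈ L^∞(X × ℝ) is nonnegative. Then G f(x,t) := Σ_{n≥0} ∫ f(gx, t + σ(g,x)) dρ^{*n}(g) equals lim_{s→0^+} Σ_{n≥0} ∫ e^{−sσ(g,x)} f(gx, t+σ(g,x)) dρ^{*n}(g). -/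
/-!
Sum the measures `ρ^{*n}` into the single measure `ν = Σₙ ρ^{*n}`, so that both sides become
Lebesgue integrals against `ν`. Fatou's lemma gives the lower bound on the liminf. For the upper
bound, convexity of `exp` gives `e^{-sσ} ≤ (s/η) e^{-ησ} + 1 - s/η` for `0 < s ≤ η`, so the
integral at `s` exceeds the limit by at most `(s/η) C_f ∫ e^{-ησ} dν`, and the drift hypothesis
at `s = η` makes `∫ e^{-ησ} dν ≤ Σₙ C e^{-τηn}` finite.
-/

noncomputable section

open MeasureTheory Filter
open scoped ENNReal

open Real Topology

lemma exp_neg_mul_mul_le_add {s η a b : ℝ} (hs : 0 ≤ s) (hsη : s ≤ η) (hη : 0 < η)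
    (hb : 0 ≤ b) :
    exp (-s * a) * b ≤ b + s / η * exp (-η * a) * b := by
  have hq : 0 ≤ s / η := div_nonneg hs hη.le
  have hq1 : s / η ≤ 1 := (div_le_one hη).2 hsη
  have hconv : exp (-s * a) ≤ s / η * exp (-η * a) + (1 - s / η) := by
    have hcomb : s / η * (-η * a) + (1 - s / η) * 0 = -s * a := by
      rw [mul_zero, add_zero]; field_simp
    have := convexOn_exp.2 (Set.mem_univ (-η * a)) (Set.mem_univ 0) hq (sub_nonneg.2 hq1)
      (add_sub_cancel _ _)
    rwa [smul_eq_mul, smul_eq_mul, smul_eq_mul, smul_eq_mul, hcomb, exp_zero, mul_one] at this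
  nlinarith [mul_le_mul_of_nonneg_right hconv hb]

lemma ENNReal.tsum_ofReal_mul_exp_nat_mul_ne_top {c : ℝ} (hc : c < 0) (C : ℝ) :
    ∑' n : ℕ, ENNReal.ofReal (C * exp (c * n)) ≠ ∞ := by
  have hsum : Summable fun n : ℕ => C * exp (c * n) := by
    simpa only [mul_comm c] using (Real.summable_exp_nat_mul_iff.2 hc).mul_left C
  exact ENNReal.tsum_coe_ne_top_iff_summable.2 hsum.toNNReal

section ExpTilt

variable {α : Type*} [MeasurableSpace α] {ν : Measure α} {σ h : α → ℝ}

lemma lintegral_ofReal_le_liminf_lintegral_exp_neg_mul (hσ : Measurable σ) (hh : Measurable h) :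
    ∫⁻ a, ENNReal.ofReal (h a) ∂ν
      ≤ liminf (fun s : ℝ => ∫⁻ a, ENNReal.ofReal (exp (-s * σ a) * h a) ∂ν) (𝓝[>] 0) := by
  have hlim : ∀ a, Tendsto (fun s : ℝ => ENNReal.ofReal (exp (-s * σ a) * h a)) (𝓝[>] 0)
      (𝓝 (ENNReal.ofReal (h a))) := fun a => by
    have hcont : Continuous fun s : ℝ => ENNReal.ofReal (exp (-s * σ a) * h a) :=
      ENNReal.continuous_ofReal.comp (by fun_prop)
    simpa using hcont.continuousWithinAt.tendsto (x := 0) (s := Set.Ioi 0)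
  calc ∫⁻ a, ENNReal.ofReal (h a) ∂ν
      = ∫⁻ a, liminf (fun s : ℝ => ENNReal.ofReal (exp (-s * σ a) * h a)) (𝓝[>] 0) ∂ν :=
        lintegral_congr fun a => (hlim a).liminf_eq.symm
    _ ≤ _ := lintegral_liminf_le fun s => by fun_prop

lemma limsup_lintegral_exp_neg_mul_le {η B : ℝ} (hη : 0 < η) (hσ : Measurable σ)
    (hh : Measurable h) (hh0 : ∀ a, 0 ≤ h a) (hhB : ∀ a, h a ≤ B)
    (hfin : ∫⁻ a, ENNReal.ofReal (exp (-η * σ a)) ∂ν ≠ ∞) :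
    limsup (fun s : ℝ => ∫⁻ a, ENNReal.ofReal (exp (-s * σ a) * h a) ∂ν) (𝓝[>] 0)
      ≤ ∫⁻ a, ENNReal.ofReal (h a) ∂ν := by
  set L := ∫⁻ a, ENNReal.ofReal (h a) ∂ν
  set M := ENNReal.ofReal B * ∫⁻ a, ENNReal.ofReal (exp (-η * σ a)) ∂ν
  have hbound : ∀ s ∈ Set.Ioc (0 : ℝ) η,
      ∫⁻ a, ENNReal.ofReal (exp (-s * σ a) * h a) ∂ν ≤ L + ENNReal.ofReal (s / η) * M := by
    intro s hs
    have hq : 0 ≤ s / η := div_nonneg hs.1.le hη.le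
    calc ∫⁻ a, ENNReal.ofReal (exp (-s * σ a) * h a) ∂ν
        ≤ ∫⁻ a, ENNReal.ofReal (h a)
            + ENNReal.ofReal (s / η) * ENNReal.ofReal B * ENNReal.ofReal (exp (-η * σ a)) ∂ν := by
          refine lintegral_mono fun a => ?_
          calc ENNReal.ofReal (exp (-s * σ a) * h a)
              ≤ ENNReal.ofReal (h a + s / η * exp (-η * σ a) * h a) :=
                ENNReal.ofReal_le_ofReal (exp_neg_mul_mul_le_add hs.1.le hs.2 hη (hh0 a))
            _ = ENNReal.ofReal (h a) + ENNReal.ofReal (s / η) * ENNReal.ofReal (h a)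
                  * ENNReal.ofReal (exp (-η * σ a)) := by
                rw [ENNReal.ofReal_add (hh0 a) (mul_nonneg (mul_nonneg hq (exp_nonneg _)) (hh0 a)),
                  ENNReal.ofReal_mul (mul_nonneg hq (exp_nonneg _)), ENNReal.ofReal_mul hq,
                  mul_right_comm]
            _ ≤ _ := by gcongr; exact hhB a
      _ = L + ENNReal.ofReal (s / η) * M := by
          rw [lintegral_add_left (by fun_prop), lintegral_const_mul _ (by fun_prop), mul_assoc]
  have hlim : Tendsto (fun s : ℝ => L + ENNReal.ofReal (s / η) * M) (𝓝[>] 0) (𝓝 L) := by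
    have hq : Tendsto (fun s : ℝ => ENNReal.ofReal (s / η)) (𝓝[>] 0) (𝓝 0) := by
      have hcont : Continuous fun s : ℝ => ENNReal.ofReal (s / η) :=
        ENNReal.continuous_ofReal.comp (continuous_id.div_const η)
      simpa using hcont.continuousWithinAt.tendsto (x := 0) (s := Set.Ioi 0)
    simpa only [zero_mul, add_zero] using tendsto_const_nhds.add
      (ENNReal.Tendsto.mul_const hq (Or.inr (ENNReal.mul_ne_top ENNReal.ofReal_ne_top hfin)))
  calc limsup (fun s : ℝ => ∫⁻ a, ENNReal.ofReal (exp (-s * σ a) * h a) ∂ν) (𝓝[>] 0)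
      ≤ limsup (fun s : ℝ => L + ENNReal.ofReal (s / η) * M) (𝓝[>] 0) :=
        limsup_le_limsup (eventually_of_mem (Ioc_mem_nhdsGT hη) hbound)
    _ = L := hlim.limsup_eq

theorem tendsto_lintegral_exp_neg_mul_mul_nhdsGT_zero {η B : ℝ} (hη : 0 < η)
    (hσ : Measurable σ) (hh : Measurable h) (hh0 : ∀ a, 0 ≤ h a) (hhB : ∀ a, h a ≤ B)
    (hfin : ∫⁻ a, ENNReal.ofReal (exp (-η * σ a)) ∂ν ≠ ∞) :
    Tendsto (fun s : ℝ => ∫⁻ a, ENNReal.ofReal (exp (-s * σ a) * h a) ∂ν) (𝓝[>] 0)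
      (𝓝 (∫⁻ a, ENNReal.ofReal (h a) ∂ν)) :=
  tendsto_of_le_liminf_of_limsup_le (lintegral_ofReal_le_liminf_lintegral_exp_neg_mul hσ hh)
    (limsup_lintegral_exp_neg_mul_le hη hσ hh hh0 hhB hfin)

end ExpTilt

theorem stmt19_general {G : Type*} [Group G] [MeasurableSpace G]
    (ρ : Measure G)
    {X : Type*} [MulAction G X]
    (σ : G → X → ℝ)
    (η τ C : ℝ) (hη : 0 < η) (hτ : 0 < τ)
    (hdrift : ∀ s ∈ Set.Icc (0 : ℝ) η, ∀ (n : ℕ) (x : X),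
      ∫⁻ g, ENNReal.ofReal (Real.exp (-s * σ g x)) ∂(convPow ρ n)
        ≤ ENNReal.ofReal (C * Real.exp (-τ * s * n)))
    (f : X → ℝ → ℝ) (Cf : ℝ)
    (hf0 : ∀ (x : X) (u : ℝ), 0 ≤ f x u)
    (hfb : ∀ (x : X) (u : ℝ), f x u ≤ Cf)
    (x : X) (t : ℝ)
    (hmeasσ : Measurable fun g : G => σ g x)
    (hmeasf : Measurable fun g : G => f (g • x) (t + σ g x)) :
    Tendsto
      (fun s : ℝ => ∑' n : ℕ,
        ∫⁻ g, ENNReal.ofReal (Real.exp (-s * σ g x) * f (g • x) (t + σ g x))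
          ∂(convPow ρ n))
      (nhdsWithin 0 (Set.Ioi 0))
      (nhds (∑' n : ℕ, ∫⁻ g, ENNReal.ofReal (f (g • x) (t + σ g x)) ∂(convPow ρ n))) := by
  have hfin : ∫⁻ g, ENNReal.ofReal (exp (-η * σ g x)) ∂Measure.sum (convPow ρ) ≠ ∞ := by
    rw [lintegral_sum_measure]
    refine ne_top_of_le_ne_top
      (ENNReal.tsum_ofReal_mul_exp_nat_mul_ne_top (c := -τ * η) (by nlinarith) C) ?_
    exact ENNReal.tsum_le_tsum fun n => hdrift η ⟨hη.le, le_rfl⟩ n x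
  simp only [← lintegral_sum_measure]
  exact tendsto_lintegral_exp_neg_mul_mul_nhdsGT_zero hη hmeasσ hmeasf
    (fun g => hf0 _ _) (fun g => hfb _ _) hfin

/-- Suppose `X` is a compact metric `G`-space, contracted by `ρ` over a finite `G`-set
`A`, and `σ : G × X → ℝ` is a cocycle with positive drift: there are `η, τ, C > 0` with
`sup_x ∫ e^{-sσ(g,x)} dρ^{*n}(g) ≤ C e^{-τ s n}` for all `s ∈ [0,η]` and all `n`.
Then for every bounded nonnegative `f ∈ L^∞(X × ℝ)`,
`G f(x,t) := Σ_n ∫ f(gx, t + σ(g,x)) dρ^{*n}(g)` equals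
`lim_{s→0⁺} Σ_n ∫ e^{-sσ(g,x)} f(gx, t + σ(g,x)) dρ^{*n}(g)`. -/
theorem stmt19 {G : Type*} [Group G] [TopologicalSpace G] [IsTopologicalGroup G]
    [SecondCountableTopology G] [MeasurableSpace G] [BorelSpace G]
    (ρ : Measure G) [IsProbabilityMeasure ρ]
    {X : Type*} [MetricSpace X] [CompactSpace X]
    [MeasurableSpace X] [BorelSpace X] [MulAction G X]
    (hact : Continuous fun p : G × X => p.1 • p.2)
    {A : Type*} [Fintype A] [MulAction G A] (πA : X → A)
    (hπ : ∀ (g : G) (x : X), πA (g • x) = g • πA x)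
    (σ : G → X → ℝ) (hσ : Continuous fun p : G × X => σ p.1 p.2)
    (hcocycle : ∀ (g₂ g₁ : G) (x : X), σ (g₂ * g₁) x = σ g₂ (g₁ • x) + σ g₁ x)
    (η τ C : ℝ) (hη : 0 < η) (hτ : 0 < τ) (hC : 0 < C)
    (hdrift : ∀ s ∈ Set.Icc (0 : ℝ) η, ∀ (n : ℕ) (x : X),
      ∫⁻ g, ENNReal.ofReal (Real.exp (-s * σ g x)) ∂(convPow ρ n)
        ≤ ENNReal.ofReal (C * Real.exp (-τ * s * n)))
    (f : X → ℝ → ℝ) (Cf : ℝ)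
    (hf0 : ∀ (x : X) (u : ℝ), 0 ≤ f x u)
    (hfb : ∀ (x : X) (u : ℝ), f x u ≤ Cf)
    (x : X) (t : ℝ)
    (hmeasσ : Measurable fun g : G => σ g x)
    (hmeasf : Measurable fun g : G => f (g • x) (t + σ g x)) :
    Tendsto
      (fun s : ℝ => ∑' n : ℕ,
        ∫⁻ g, ENNReal.ofReal (Real.exp (-s * σ g x) * f (g • x) (t + σ g x))
          ∂(convPow ρ n))
      (nhdsWithin 0 (Set.Ioi 0))
      (nhds (∑' n : ℕ, ∫⁻ g, ENNReal.ofReal (f (g • x) (t + σ g x)) ∂(convPow ρ n))) :=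
  stmt19_general ρ σ η τ C hη hτ hdrift f Cf hf0 hfb x t hmeasσ hmeasf
end
end
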